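/- arXiv:2101.01072 — 7 statements merged into one kernel-verified Lean document; each statement's English description precedes it below -/
import Mathlib

section
/- Let P (trip nodes) and Ω (routes) be finite sets, let a : Ω → P → ℝ satisfy a ρ i ≥ 0 for all ρ and i, let μ : P → ℝ satisfy μ i ≥ 0 for all i, and let c̄ be a real number with c̄ < 1 such that for every route ρ ∈ Ω one has 1 - ∑_{i ∈ P} a ρ i * μ i ≥ c̄ (i.e., c̄ is a lower bound on all route reduced costs). Then for every x : Ω → ℝ with x ρ ≥ 0 for all ρ and ∑_{ρ ∈ Ω} a ρ i * x ρ ≥ 1 for every i ∈ P (i.e., x is feasible for the set-covering linear program), the objective value satisfies ∑_{ρ ∈ Ω} x ρ ≥ (∑_{i ∈ P} μ i) / (1 - c̄). -/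
/-!
Weak LP duality for the covering program: pairing the coverage constraints with `μ` and
swapping the order of summation gives `∑ μ ≤ ∑_ρ x ρ · (∑_i a ρ i μ i)`, and every
inner sum is at most `1 - cbar`. Equivalently, `μ / (1 - cbar)` is dual feasible.
-/

namespace Finset

variable {ι κ R : Type*} [CommSemiring R]

theorem sum_mul_sum_cover_eq (P : Finset ι) (Ω : Finset κ) (a : κ → ι → R) (μ : ι → R)
    (x : κ → R) :
    ∑ i ∈ P, μ i * ∑ ρ ∈ Ω, a ρ i * x ρ = ∑ ρ ∈ Ω, x ρ * ∑ i ∈ P, a ρ i * μ i := by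
  simp_rw [mul_sum]
  rw [sum_comm]
  refine sum_congr rfl fun ρ _ => sum_congr rfl fun i _ => ?_
  ring

variable [PartialOrder R] [IsOrderedRing R]
  {P : Finset ι} {Ω : Finset κ} {a : κ → ι → R} {μ : ι → R} {x : κ → R}

theorem sum_le_sum_mul_of_cover (hμ : ∀ i ∈ P, 0 ≤ μ i)
    (hcov : ∀ i ∈ P, 1 ≤ ∑ ρ ∈ Ω, a ρ i * x ρ) :
    ∑ i ∈ P, μ i ≤ ∑ ρ ∈ Ω, x ρ * ∑ i ∈ P, a ρ i * μ i :=
  calc ∑ i ∈ P, μ i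
      ≤ ∑ i ∈ P, μ i * ∑ ρ ∈ Ω, a ρ i * x ρ :=
        sum_le_sum fun i hi => le_mul_of_one_le_right (hμ i hi) (hcov i hi)
    _ = ∑ ρ ∈ Ω, x ρ * ∑ i ∈ P, a ρ i * μ i := sum_mul_sum_cover_eq P Ω a μ x

theorem sum_le_mul_sum_of_cover {c : R} (hμ : ∀ i ∈ P, 0 ≤ μ i) (hx : ∀ ρ ∈ Ω, 0 ≤ x ρ)
    (hload : ∀ ρ ∈ Ω, ∑ i ∈ P, a ρ i * μ i ≤ c)
    (hcov : ∀ i ∈ P, 1 ≤ ∑ ρ ∈ Ω, a ρ i * x ρ) :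
    ∑ i ∈ P, μ i ≤ c * ∑ ρ ∈ Ω, x ρ :=
  calc ∑ i ∈ P, μ i
      ≤ ∑ ρ ∈ Ω, x ρ * ∑ i ∈ P, a ρ i * μ i := sum_le_sum_mul_of_cover hμ hcov
    _ ≤ ∑ ρ ∈ Ω, x ρ * c :=
        sum_le_sum fun ρ hρ => mul_le_mul_of_nonneg_left (hload ρ hρ) (hx ρ hρ)
    _ = c * ∑ ρ ∈ Ω, x ρ := by rw [← sum_mul, mul_comm]

end Finset

theorem farley_lower_bound_general {ι κ : Type*} (P : Finset ι) (Ω : Finset κ)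
    (a : κ → ι → ℝ) (μ : ι → ℝ) (cbar : ℝ)
    (hμ : ∀ i, 0 ≤ μ i) (hc : cbar < 1)
    (hred : ∀ ρ ∈ Ω, cbar ≤ 1 - ∑ i ∈ P, a ρ i * μ i)
    (x : κ → ℝ) (hx : ∀ ρ, 0 ≤ x ρ)
    (hcov : ∀ i ∈ P, 1 ≤ ∑ ρ ∈ Ω, a ρ i * x ρ) :
    (∑ i ∈ P, μ i) / (1 - cbar) ≤ ∑ ρ ∈ Ω, x ρ := by
  rw [div_le_iff₀ (sub_pos.2 hc), mul_comm]
  exact Finset.sum_le_mul_sum_of_cover (fun i _ => hμ i) (fun ρ _ => hx ρ)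
    (fun ρ hρ => by linarith [hred ρ hρ]) hcov

/-- Farley lower bound: if `cbar < 1` is a lower bound on all route reduced costs
`1 - ∑ i, a ρ i * μ i` for nonnegative duals `μ`, then every feasible solution `x`
of the set-covering LP has objective value at least `(∑ i, μ i) / (1 - cbar)`. -/
theorem farley_lower_bound {ι κ : Type*} (P : Finset ι) (Ω : Finset κ)
    (a : κ → ι → ℝ) (μ : ι → ℝ) (cbar : ℝ)
    (ha : ∀ ρ i, 0 ≤ a ρ i) (hμ : ∀ i, 0 ≤ μ i) (hc : cbar < 1)
    (hred : ∀ ρ ∈ Ω, cbar ≤ 1 - ∑ i ∈ P, a ρ i * μ i)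
    (x : κ → ℝ) (hx : ∀ ρ, 0 ≤ x ρ)
    (hcov : ∀ i ∈ P, 1 ≤ ∑ ρ ∈ Ω, a ρ i * x ρ) :
    (∑ i ∈ P, μ i) / (1 - cbar) ≤ ∑ ρ ∈ Ω, x ρ :=
  farley_lower_bound_general P Ω a μ cbar hμ hc hred x hx hcov
end

section
/- Let a_i, b_i, a_j, b_j, s_i, τ_ij be real numbers, let T_i, T_j be reals with a_i ≤ T_i ≤ b_i and a_j ≤ T_j ≤ b_j, and let Y_ij, Y_ji ∈ {0, 1} with Y_ij + Y_ji ≤ 1. Define M = max(0, b_i + s_i + τ_ij - a_j) and α = M - s_i - τ_ij - b_i + a_j. If Y_ij = 1 implies T_i + s_i + τ_ij ≤ T_j, then the lifted Miller–Tucker–Zemlin inequality T_i + s_i + τ_ij ≤ T_j + M·(1 - Y_ij) - α·Y_ji holds. -/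
/- Each of the three admissible values of `(Y_ij, Y_ji)` reduces the inequality to a linear one:
for `(0,0)` it is the big-`M` bound `T_i + s_i + τ_ij ≤ b_i + s_i + τ_ij ≤ T_j + M`, for `(1,0)` it is
the precedence constraint itself, and for `(0,1)` the lifting coefficient is chosen exactly so that
`M` cancels and what remains is `T_i - b_i ≤ 0 ≤ T_j - a_j`. -/

theorem lifted_MTZ_pickup_of_le {b_i a_j s_i τ_ij T_i T_j Y_ij Y_ji M : ℝ}
    (hM : b_i + s_i + τ_ij - a_j ≤ M) (hTi : T_i ≤ b_i) (hTj : a_j ≤ T_j)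
    (hYij : Y_ij = 0 ∨ Y_ij = 1) (hYji : Y_ji = 0 ∨ Y_ji = 1) (hsum : Y_ij + Y_ji ≤ 1)
    (himp : Y_ij = 1 → T_i + s_i + τ_ij ≤ T_j) :
    T_i + s_i + τ_ij ≤ T_j + M * (1 - Y_ij) - (M - s_i - τ_ij - b_i + a_j) * Y_ji := by
  rcases hYij with rfl | rfl <;> rcases hYji with rfl | rfl
  · linarith
  · linarith
  · linarith [himp rfl]
  · norm_num at hsum

theorem lifted_MTZ_pickup_general (b_i a_j s_i τ_ij T_i T_j Y_ij Y_ji : ℝ)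
    (hTi2 : T_i ≤ b_i) (hTj1 : a_j ≤ T_j)
    (hYij : Y_ij = 0 ∨ Y_ij = 1) (hYji : Y_ji = 0 ∨ Y_ji = 1)
    (hsum : Y_ij + Y_ji ≤ 1)
    (himp : Y_ij = 1 → T_i + s_i + τ_ij ≤ T_j) :
    T_i + s_i + τ_ij ≤
      T_j + (max 0 (b_i + s_i + τ_ij - a_j)) * (1 - Y_ij)
        - (max 0 (b_i + s_i + τ_ij - a_j) - s_i - τ_ij - b_i + a_j) * Y_ji :=
  lifted_MTZ_pickup_of_le (le_max_right _ _) hTi2 hTj1 hYij hYji hsum himp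

/-- Validity of the lifted MTZ inequality when node `i` is a pickup node, with
lifting coefficient `α = M - s_i - τ_ij - b_i + a_j`. -/
theorem lifted_MTZ_pickup (a_i b_i a_j b_j s_i τ_ij T_i T_j Y_ij Y_ji : ℝ)
    (hTi1 : a_i ≤ T_i) (hTi2 : T_i ≤ b_i) (hTj1 : a_j ≤ T_j) (hTj2 : T_j ≤ b_j)
    (hYij : Y_ij = 0 ∨ Y_ij = 1) (hYji : Y_ji = 0 ∨ Y_ji = 1)
    (hsum : Y_ij + Y_ji ≤ 1)
    (himp : Y_ij = 1 → T_i + s_i + τ_ij ≤ T_j) :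
    T_i + s_i + τ_ij ≤
      T_j + (max 0 (b_i + s_i + τ_ij - a_j)) * (1 - Y_ij)
        - (max 0 (b_i + s_i + τ_ij - a_j) - s_i - τ_ij - b_i + a_j) * Y_ji :=
  lifted_MTZ_pickup_general b_i a_j s_i τ_ij T_i T_j Y_ij Y_ji hTi2 hTj1 hYij hYji hsum himp
end

section
/- Let a_i, b_i, a_j, b_j, s_i, s_j, τ_ij, τ_ji be real numbers, let T_i, T_j be reals with a_i ≤ T_i ≤ b_i and a_j ≤ T_j ≤ b_j, and let Y_ij, Y_ji ∈ {0, 1} with Y_ij + Y_ji ≤ 1. Define M = max(0, b_i + s_i + τ_ij - a_j) and α = M - s_i - τ_ij - s_j - τ_ji. If Y_ij = 1 implies T_i + s_i + τ_ij ≤ T_j, and Y_ji = 1 implies T_j + s_j + τ_ji = T_i, then the lifted Miller–Tucker–Zemlin inequality T_i + s_i + τ_ij ≤ T_j + M·(1 - Y_ij) - α·Y_ji holds. -/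
/-! The inequality is affine in the binary pair `(Y_ij, Y_ji)`, so it suffices to check the three
admissible vertices. At `(0, 0)` it is the big-`M` bound, valid by the time windows; at `(1, 0)`
it is the precedence constraint of the edge `(i, j)`; at `(0, 1)` the lifting coefficient is
exactly what turns it into the drop-off equation `T_j + s_j + τ_ji = T_i`. -/

lemma lifted_MTZ_of_bigM {t_i t_j c_ij c_ji M Y_ij Y_ji : ℝ}
    (hYij : Y_ij = 0 ∨ Y_ij = 1) (hYji : Y_ji = 0 ∨ Y_ji = 1) (hsum : Y_ij + Y_ji ≤ 1)
    (hM : t_i + c_ij ≤ t_j + M)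
    (himp : Y_ij = 1 → t_i + c_ij ≤ t_j)
    (himp' : Y_ji = 1 → t_j + c_ji = t_i) :
    t_i + c_ij ≤ t_j + M * (1 - Y_ij) - (M - c_ij - c_ji) * Y_ji := by
  rcases hYij with rfl | rfl <;> rcases hYji with rfl | rfl
  · simpa using hM
  · linarith [himp' rfl]
  · simpa using himp rfl
  · norm_num at hsum

theorem lifted_MTZ_dropoff_general (b_i a_j s_i s_j τ_ij τ_ji T_i T_j Y_ij Y_ji : ℝ)
    (hTi2 : T_i ≤ b_i) (hTj1 : a_j ≤ T_j)
    (hYij : Y_ij = 0 ∨ Y_ij = 1) (hYji : Y_ji = 0 ∨ Y_ji = 1)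
    (hsum : Y_ij + Y_ji ≤ 1)
    (himp : Y_ij = 1 → T_i + s_i + τ_ij ≤ T_j)
    (himp' : Y_ji = 1 → T_j + s_j + τ_ji = T_i) :
    T_i + s_i + τ_ij ≤
      T_j + (max 0 (b_i + s_i + τ_ij - a_j)) * (1 - Y_ij)
        - (max 0 (b_i + s_i + τ_ij - a_j) - s_i - τ_ij - s_j - τ_ji) * Y_ji := by
  have hM : T_i + (s_i + τ_ij) ≤ T_j + max 0 (b_i + s_i + τ_ij - a_j) := by
    linarith [le_max_right 0 (b_i + s_i + τ_ij - a_j)]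
  have hlifted := lifted_MTZ_of_bigM (c_ji := s_j + τ_ji) hYij hYji hsum hM
    (fun h ↦ by linarith [himp h]) (fun h ↦ by linarith [himp' h])
  linarith

/-- Validity of the lifted MTZ inequality when node `i` is a drop-off node, with
lifting coefficient `α = M - s_i - τ_ij - s_j - τ_ji`. -/
theorem lifted_MTZ_dropoff (a_i b_i a_j b_j s_i s_j τ_ij τ_ji T_i T_j Y_ij Y_ji : ℝ)
    (hTi1 : a_i ≤ T_i) (hTi2 : T_i ≤ b_i) (hTj1 : a_j ≤ T_j) (hTj2 : T_j ≤ b_j)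
    (hYij : Y_ij = 0 ∨ Y_ij = 1) (hYji : Y_ji = 0 ∨ Y_ji = 1)
    (hsum : Y_ij + Y_ji ≤ 1)
    (himp : Y_ij = 1 → T_i + s_i + τ_ij ≤ T_j)
    (himp' : Y_ji = 1 → T_j + s_j + τ_ji = T_i) :
    T_i + s_i + τ_ij ≤
      T_j + (max 0 (b_i + s_i + τ_ij - a_j)) * (1 - Y_ij)
        - (max 0 (b_i + s_i + τ_ij - a_j) - s_i - τ_ij - s_j - τ_ji) * Y_ji :=
  lifted_MTZ_dropoff_general b_i a_j s_i s_j τ_ij τ_ji T_i T_j Y_ij Y_ji hTi2 hTj1 hYij hYji hsum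
    himp himp'
end

section
/- Let a_i, b_i, a_j, b_j, s_i, s_j, τ_ij, τ_ji be real numbers, let T_i, T_j be reals with a_i ≤ T_i ≤ b_i and a_j ≤ T_j ≤ b_j, and let Y_ij, Y_ji ∈ {0, 1} with Y_ij + Y_ji ≤ 1. Define M̄ = max(0, b_j - a_i - s_i - τ_ij) and β = -M̄ - s_i - τ_ij - s_j - τ_ji. If Y_ij = 1 implies T_i + s_i + τ_ij ≥ T_j, and Y_ji = 1 implies T_j + s_j + τ_ji ≤ T_i, then the lifted inequality T_i + s_i + τ_ij ≥ T_j - M̄·(1 - Y_ij) - β·Y_ji holds. -/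
/-!
Exactly one of three cases occurs, since `Y_ij + Y_ji ≤ 1` rules out using both edges. If neither
edge is used, the inequality is the big-M bound, valid because the time windows give
`T_j - T_i - s_i - τ_ij ≤ b_j - a_i - s_i - τ_ij ≤ M̄`. If `(i,j)` is used, it is the arrival
constraint itself. If `(j,i)` is used, the lifting term `-β` cancels `M̄`, and what remains is
the constraint `T_j + s_j + τ_ji ≤ T_i` shifted by `s_i + τ_ij`.
-/

theorem sub_max_zero_le_add {a_i b_j s_i τ_ij T_i T_j : ℝ} (hT_i : a_i ≤ T_i) (hT_j : T_j ≤ b_j) :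
    T_j - max 0 (b_j - a_i - s_i - τ_ij) ≤ T_i + s_i + τ_ij := by
  linarith [le_max_right 0 (b_j - a_i - s_i - τ_ij)]

theorem lifted_MTZ_lower_general (a_i b_j s_i s_j τ_ij τ_ji T_i T_j Y_ij Y_ji : ℝ)
    (hTi1 : a_i ≤ T_i) (hTj2 : T_j ≤ b_j)
    (hYij : Y_ij = 0 ∨ Y_ij = 1) (hYji : Y_ji = 0 ∨ Y_ji = 1)
    (hsum : Y_ij + Y_ji ≤ 1)
    (himp : Y_ij = 1 → T_i + s_i + τ_ij ≥ T_j)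
    (himp' : Y_ji = 1 → T_j + s_j + τ_ji ≤ T_i) :
    T_i + s_i + τ_ij ≥
      T_j - (max 0 (b_j - a_i - s_i - τ_ij)) * (1 - Y_ij)
        - (-(max 0 (b_j - a_i - s_i - τ_ij)) - s_i - τ_ij - s_j - τ_ji) * Y_ji := by
  have hbigM := sub_max_zero_le_add (s_i := s_i) (τ_ij := τ_ij) hTi1 hTj2
  rcases hYij with rfl | rfl <;> rcases hYji with rfl | rfl
  · linarith
  · linarith [himp' rfl]
  · linarith [himp rfl]
  · norm_num at hsum

/-- Validity of the lifted lower-bounding MTZ inequality, with lifting coefficient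
`β = -M̄ - s_i - τ_ij - s_j - τ_ji`. -/
theorem lifted_MTZ_lower (a_i b_i a_j b_j s_i s_j τ_ij τ_ji T_i T_j Y_ij Y_ji : ℝ)
    (hTi1 : a_i ≤ T_i) (hTi2 : T_i ≤ b_i) (hTj1 : a_j ≤ T_j) (hTj2 : T_j ≤ b_j)
    (hYij : Y_ij = 0 ∨ Y_ij = 1) (hYji : Y_ji = 0 ∨ Y_ji = 1)
    (hsum : Y_ij + Y_ji ≤ 1)
    (himp : Y_ij = 1 → T_i + s_i + τ_ij ≥ T_j)
    (himp' : Y_ji = 1 → T_j + s_j + τ_ji ≤ T_i) :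
    T_i + s_i + τ_ij ≥
      T_j - (max 0 (b_j - a_i - s_i - τ_ij)) * (1 - Y_ij)
        - (-(max 0 (b_j - a_i - s_i - τ_ij)) - s_i - τ_ij - s_j - τ_ji) * Y_ji :=
  lifted_MTZ_lower_general a_i b_j s_i s_j τ_ij τ_ji T_i T_j Y_ij Y_ji hTi1 hTj2 hYij hYji hsum himp
    himp'
end

section
/- Let i be a node with time-window lower bound a_i and start-of-service time T_i ≥ a_i. Let J be a finite set of potential predecessor nodes, where each j ∈ J has time-window lower bound a_j, start-of-service time T_j ≥ a_j, service duration s_j, and travel time τ_ji to node i. Let Y : J → {0, 1} satisfy ∑_{j ∈ J} Y_j ≤ 1, and suppose that Y_j = 1 implies T_j + s_j + τ_ji ≤ T_i. Then T_i ≥ a_i + ∑_{j ∈ J} max(0, a_j - a_i + s_j + τ_ji) · Y_j. -/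
theorem Finset.sum_mul_le_of_sum_le_one_of_zero_or_one {ι R : Type*} [Semiring R] [PartialOrder R]
    [IsOrderedRing R] {J : Finset ι} {c Y : ι → R} {B : R} (hB : 0 ≤ B)
    (hY : ∀ j ∈ J, Y j = 0 ∨ Y j = 1) (hsum : ∑ j ∈ J, Y j ≤ 1)
    (hc : ∀ j ∈ J, Y j = 1 → c j ≤ B) :
    ∑ j ∈ J, c j * Y j ≤ B :=
  calc ∑ j ∈ J, c j * Y j ≤ ∑ j ∈ J, B * Y j := by
        refine Finset.sum_le_sum fun j hj => ?_
        rcases hY j hj with h0 | h1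
        · simp [h0]
        · simpa [h1] using hc j hj h1
    _ = B * ∑ j ∈ J, Y j := (Finset.mul_sum J Y B).symm
    _ ≤ B * 1 := mul_le_mul_of_nonneg_left hsum hB
    _ = B := mul_one B

theorem max_zero_sub_add_add_le {a_i T_i a_j T_j s τ : ℝ} (hTi : a_i ≤ T_i) (hTj : a_j ≤ T_j)
    (hprec : T_j + s + τ ≤ T_i) :
    max 0 (a_j - a_i + s + τ) ≤ T_i - a_i :=
  max_le (by linarith) (by linarith)

/-- Validity of the lifted time-bound inequality strengthening the lower
time-window bound of node `i` using its incoming edges. -/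
theorem lifted_time_lower_bound {ι : Type*} (J : Finset ι) (a_i T_i : ℝ)
    (hTi : a_i ≤ T_i)
    (a T s τ : ι → ℝ)
    (hT : ∀ j ∈ J, a j ≤ T j)
    (Y : ι → ℝ) (hY : ∀ j ∈ J, Y j = 0 ∨ Y j = 1)
    (hsum : ∑ j ∈ J, Y j ≤ 1)
    (himp : ∀ j ∈ J, Y j = 1 → T j + s j + τ j ≤ T_i) :
    a_i + ∑ j ∈ J, max 0 (a j - a_i + s j + τ j) * Y j ≤ T_i := by
  have hlift : ∑ j ∈ J, max 0 (a j - a_i + s j + τ j) * Y j ≤ T_i - a_i :=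
    Finset.sum_mul_le_of_sum_le_one_of_zero_or_one (sub_nonneg.mpr hTi) hY hsum
      fun j hj hYj => max_zero_sub_add_add_le hTi (hT j hj) (himp j hj hYj)
  linarith
end

section
/- Let i be a node with time-window upper bound b_i, service duration s_i, and start-of-service time T_i ≤ b_i. Let J be a finite set of potential successor nodes, where each j ∈ J has time-window upper bound b_j, start-of-service time T_j ≤ b_j, and travel time τ_ij from node i. Let Y : J → {0, 1} satisfy ∑_{j ∈ J} Y_j ≤ 1, and suppose that Y_j = 1 implies T_i + s_i + τ_ij ≤ T_j. Then T_i ≤ b_i - ∑_{j ∈ J} max(0, b_i - b_j + s_i + τ_ij) · Y_j. -/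
theorem Finset.sum_mul_le_of_zero_or_one {ι R : Type*} [Semiring R] [PartialOrder R]
    [IsOrderedRing R] (s : Finset ι) (f Y : ι → R) {c : R} (hc : 0 ≤ c)
    (hY : ∀ j ∈ s, Y j = 0 ∨ Y j = 1) (hsum : ∑ j ∈ s, Y j ≤ 1)
    (hf : ∀ j ∈ s, Y j = 1 → f j ≤ c) :
    ∑ j ∈ s, f j * Y j ≤ c :=
  calc ∑ j ∈ s, f j * Y j ≤ ∑ j ∈ s, c * Y j := by
        refine Finset.sum_le_sum fun j hj => ?_
        rcases hY j hj with hY0 | hY1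
        · simp [hY0]
        · simpa [hY1] using hf j hj hY1
    _ = c * ∑ j ∈ s, Y j := (Finset.mul_sum s Y c).symm
    _ ≤ c * 1 := mul_le_mul_of_nonneg_left hsum hc
    _ = c := mul_one c

/-- Validity of the lifted time-bound inequality strengthening the upper
time-window bound of node `i` using its outgoing edges. -/
theorem lifted_time_upper_bound {ι : Type*} (J : Finset ι) (b_i s_i T_i : ℝ)
    (hTi : T_i ≤ b_i)
    (b T τ : ι → ℝ)
    (hT : ∀ j ∈ J, T j ≤ b j)
    (Y : ι → ℝ) (hY : ∀ j ∈ J, Y j = 0 ∨ Y j = 1)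
    (hsum : ∑ j ∈ J, Y j ≤ 1)
    (himp : ∀ j ∈ J, Y j = 1 → T_i + s_i + τ j ≤ T j) :
    T_i ≤ b_i - ∑ j ∈ J, max 0 (b_i - b j + s_i + τ j) * Y j := by
  have hlift_le_slack : ∀ j ∈ J, Y j = 1 → max 0 (b_i - b j + s_i + τ j) ≤ b_i - T_i :=
    fun j hj hYj => max_le (sub_nonneg.2 hTi) (by linarith [himp j hj hYj, hT j hj])
  have hlift_sum := J.sum_mul_le_of_zero_or_one _ Y (sub_nonneg.2 hTi) hY hsum hlift_le_slack
  linarith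
end

section
/- Let G be a directed graph with vertex set V containing distinguished vertices v_s and v_t with v_s ≠ v_t, let P ⊆ V be a set of pickup nodes with v_s ∉ P and v_t ∉ P, and let μ : P → ℝ. Define arc costs by c̄(u, w) = 1 if u = v_s, c̄(u, w) = -μ(u) if u ∈ P, and c̄(u, w) = 0 otherwise. Then for every directed walk ρ from v_s to v_t in which v_s occurs only as the first vertex and v_t occurs only as the last vertex, the total arc cost of ρ equals 1 - ∑_{i ∈ P} n_i(ρ) · μ(i), where n_i(ρ) denotes the number of occurrences of vertex i in ρ. -/
/-!
The cost of an arc depends only on its tail, so the cost of a walk is the sum of the tail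
costs of its vertices except the last one, `v_t`, whose cost is `0` anyway. Since `v_s ∉ P`,
the cost of a vertex `u` splits as `[u = v_s] - [u ∈ P] μ u`; summed along the walk, the
first part counts the single visit to `v_s` and the second regroups by visited pickup node.
-/

open Finset

section

variable {V : Type*} [DecidableEq V]

def reducedArcCost (vs : V) (P : Finset V) (μ : V → ℝ) (u : V) : ℝ :=
  if u = vs then 1 else if u ∈ P then -μ u else 0

lemma reducedArcCost_eq_sub {vs : V} {P : Finset V} (hsP : vs ∉ P) (μ : V → ℝ) (u : V) :
    reducedArcCost vs P μ u = (if u = vs then 1 else 0) - if u ∈ P then μ u else 0 := by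
  unfold reducedArcCost
  split_ifs with hs <;> first | (subst hs; contradiction) | ring

lemma reducedArcCost_eq_zero {vs vt : V} {P : Finset V} (hst : vs ≠ vt)
    (htP : vt ∉ P) (μ : V → ℝ) : reducedArcCost vs P μ vt = 0 := by
  simp [reducedArcCost, hst.symm, htP]

lemma sum_ite_mem_eq_sum_card_mul {ι R : Type*} [Fintype ι] [NonAssocSemiring R]
    (w : ι → V) (P : Finset V) (μ : V → R) :
    ∑ j, (if w j ∈ P then μ (w j) else 0) = ∑ i ∈ P, (#{j | w j = i} : R) * μ i := by
  rw [← sum_filter, ← sum_fiberwise_of_maps_to (g := w) (t := P) (by simp)]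
  refine sum_congr rfl fun i hi => ?_
  have hfiber : ({j | w j ∈ P} : Finset ι).filter (w · = i) = ({j | w j = i} : Finset ι) := by
    ext j
    simp +contextual [hi]
  rw [hfiber, ← nsmul_eq_mul, ← sum_const]
  exact sum_congr rfl fun j hj => by rw [(mem_filter.1 hj).2]

end

theorem reduced_cost_of_walk_general {V : Type*} [DecidableEq V]
    (vs vt : V) (hst : vs ≠ vt) (P : Finset V) (hsP : vs ∉ P) (htP : vt ∉ P)
    (μ : V → ℝ) (m : ℕ) (w : Fin (m + 1) → V)
    (h0 : w 0 = vs) (hm : w (Fin.last m) = vt)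
    (hsonce : ∀ k : Fin (m + 1), w k = vs → k = 0) :
    (∑ k : Fin m, (if w k.castSucc = vs then (1 : ℝ)
        else if w k.castSucc ∈ P then -μ (w k.castSucc) else 0))
      = 1 - ∑ i ∈ P,
          ((Finset.univ.filter (fun k : Fin (m + 1) => w k = i)).card : ℝ) * μ i := by
  have hvisit : ∀ j, w j = vs ↔ j = 0 := fun j => ⟨hsonce j, fun h => h ▸ h0⟩
  calc ∑ k : Fin m, reducedArcCost vs P μ (w k.castSucc)
      = ∑ j, reducedArcCost vs P μ (w j) := by
        rw [Fin.sum_univ_castSucc, hm, reducedArcCost_eq_zero hst htP, add_zero]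
    _ = ∑ j : Fin (m + 1), (if j = 0 then 1 else 0) - ∑ j, if w j ∈ P then μ (w j) else 0 := by
        simp only [reducedArcCost_eq_sub hsP, hvisit, sum_sub_distrib]
    _ = _ := by rw [sum_ite_eq', if_pos (mem_univ _), sum_ite_mem_eq_sum_card_mul]

/-- With reduced arc costs `1` on arcs leaving the source, `-μ u` on arcs leaving a
pickup node `u ∈ P`, and `0` otherwise, the total arc cost of any directed walk from
`v_s` to `v_t` (in which `v_s` occurs only first and `v_t` only last) equals the
reduced cost `1 - ∑ i ∈ P, n_i(ρ) * μ i`, where `n_i(ρ)` counts occurrences of `i`. -/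
theorem reduced_cost_of_walk {V : Type*} [DecidableEq V] (G : V → V → Prop)
    (vs vt : V) (hst : vs ≠ vt) (P : Finset V) (hsP : vs ∉ P) (htP : vt ∉ P)
    (μ : V → ℝ) (m : ℕ) (w : Fin (m + 1) → V)
    (h0 : w 0 = vs) (hm : w (Fin.last m) = vt)
    (hadj : ∀ k : Fin m, G (w k.castSucc) (w k.succ))
    (hsonce : ∀ k : Fin (m + 1), w k = vs → k = 0)
    (htonce : ∀ k : Fin (m + 1), w k = vt → k = Fin.last m) :
    (∑ k : Fin m, (if w k.castSucc = vs then (1 : ℝ)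
        else if w k.castSucc ∈ P then -μ (w k.castSucc) else 0))
      = 1 - ∑ i ∈ P,
          ((Finset.univ.filter (fun k : Fin (m + 1) => w k = i)).card : ℝ) * μ i :=
  reduced_cost_of_walk_general vs vt hst P hsP htP μ m w h0 hm hsonce
end
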